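/- If a network G has only finitely many points g_1,…,g_k that are farthest points of some point of G, then the eccentricity function is not locally constant on any edge of G: on every edge uv, ecc is the upper envelope of the k functions p ↦ d(p,g_i), each of which strictly increases to its unique maximum on uv and strictly decreases afterwards, hence the envelope has no nondegenerate constant piece. -/

import Mathlib

/-!
Suppose `ecc` were constant, equal to `c`, on a nondegenerate interval `[a, b]` of an edge `uv`.
Every point `x` of `[a, b]` has a farthest point `g x`, and on each side of the position of `g x`
on `uv` the function `p ↦ d(p, g x)` is a minimum of affine functions of nonzero slope, hence
strictly quasiconcave. As there are only finitely many farthest points, two distinct points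
`x ≠ y` share both their farthest point `g` and the side of it they lie on. Then
`d(·, g) = c` at `x` and `y`, so `d(m, g) > c` at their midpoint `m`, contradicting
`d(m, g) ≤ ecc m = c`.
-/

open Set

/-- A finite simple undirected network on `n` vertices with positive edge weights. -/
structure WGraph (n : ℕ) where
  adj : Fin n → Fin n → Bool
  symm : ∀ u v, adj u v = adj v u
  loopless : ∀ u, adj u u = false
  w : Fin n → Fin n → ℝ
  wsymm : ∀ u v, w u v = w v u
  wpos : ∀ u v, adj u v = true → 0 < w u v

variable {n : ℕ}

def WGraph.toSimple (G : WGraph n) : SimpleGraph (Fin n) where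
  Adj u v := G.adj u v = true
  symm := ⟨fun u v (h : G.adj u v = true) => show G.adj v u = true by rw [G.symm]; exact h⟩
  loopless := ⟨fun u (h : G.adj u u = true) => by simp [G.loopless u] at h⟩

instance (G : WGraph n) : DecidableRel G.toSimple.Adj :=
  fun u v => inferInstanceAs (Decidable (G.adj u v = true))

/-- Total weight of a walk. -/
noncomputable def WGraph.walkWeight (G : WGraph n) {u v : Fin n}
    (p : G.toSimple.Walk u v) : ℝ :=
  (p.darts.map fun d => G.w d.toProd.1 d.toProd.2).sum

/-- Weighted shortest-path distance between vertices. -/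
noncomputable def WGraph.vdist (G : WGraph n) (u v : Fin n) : ℝ :=
  sInf {x | ∃ p : G.toSimple.Walk u v, x = G.walkWeight p}

/-- Network distance between the point at parameter `a` on edge `uv` and the point at
parameter `b` on edge `st`: the minimum over routes through the endpoints, together with
the direct route along the edge when the two edges coincide. -/
noncomputable def WGraph.pdist (G : WGraph n) (u v : Fin n) (a : ℝ) (s t : Fin n) (b : ℝ) : ℝ :=
  let base := min
    (min (a * G.w u v + G.vdist u s + b * G.w s t)
         (a * G.w u v + G.vdist u t + (1 - b) * G.w s t))
    (min ((1 - a) * G.w u v + G.vdist v s + b * G.w s t)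
         ((1 - a) * G.w u v + G.vdist v t + (1 - b) * G.w s t))
  if u = s ∧ v = t then min (|a - b| * G.w u v) base
  else if u = t ∧ v = s then min (|a - (1 - b)| * G.w u v) base
  else base

/-- Eccentricity of the point at parameter `a` on edge `uv`: the largest network distance
to any point of the network. -/
noncomputable def WGraph.eccOn (G : WGraph n) (u v : Fin n) (a : ℝ) : ℝ :=
  sSup {x | ∃ s t, G.adj s t = true ∧ ∃ b ∈ Icc (0:ℝ) 1, x = G.pdist u v a s t b}

/-- A point of the network: an (oriented) edge together with a parameter in `[0,1]`. -/
abbrev NetPt (n : ℕ) := (Fin n × Fin n) × ℝ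

def WGraph.validPt (G : WGraph n) (p : NetPt n) : Prop :=
  G.adj p.1.1 p.1.2 = true ∧ p.2 ∈ Icc (0:ℝ) 1

noncomputable def WGraph.pdistPt (G : WGraph n) (p q : NetPt n) : ℝ :=
  G.pdist p.1.1 p.1.2 p.2 q.1.1 q.1.2 q.2

noncomputable def WGraph.eccPt (G : WGraph n) (p : NetPt n) : ℝ :=
  G.eccOn p.1.1 p.1.2 p.2

/-- `f` is piecewise affine on `[0,1]` with at most `N` pieces. -/
def PWAffine (f : ℝ → ℝ) (N : ℕ) : Prop :=
  ∃ t : Fin (N + 1) → ℝ, Monotone t ∧ t 0 = 0 ∧ t (Fin.last N) = 1 ∧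
    ∀ i : Fin N, ∃ a b : ℝ, ∀ x ∈ Icc (t i.castSucc) (t i.succ), f x = a * x + b

def StrictQuasiconcaveOn (𝕜 : Type*) {E β : Type*} [Semiring 𝕜] [PartialOrder 𝕜]
    [AddCommMonoid E] [Module 𝕜 E] [LinearOrder β] (s : Set E) (f : E → β) : Prop :=
  Convex 𝕜 s ∧ ∀ ⦃x⦄, x ∈ s → ∀ ⦃y⦄, y ∈ s → x ≠ y → ∀ z ∈ openSegment 𝕜 x y,
    min (f x) (f y) < f z

namespace StrictQuasiconcaveOn

variable {𝕜 E β : Type*} [Semiring 𝕜] [PartialOrder 𝕜] [AddCommMonoid E] [Module 𝕜 E]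
  [LinearOrder β] {s : Set E} {f g : E → β}

theorem min (hf : StrictQuasiconcaveOn 𝕜 s f) (hg : StrictQuasiconcaveOn 𝕜 s g) :
    StrictQuasiconcaveOn 𝕜 s fun x => min (f x) (g x) := by
  refine ⟨hf.1, fun x hx y hy hxy z hz => ?_⟩
  have hfz := hf.2 hx hy hxy z hz
  have hgz := hg.2 hx hy hxy z hz
  simp only [lt_min_iff, min_lt_iff] at hfz hgz ⊢
  grind

end StrictQuasiconcaveOn

section LinearOrderedField

variable {𝕜 β : Type*} [Field 𝕜] [LinearOrder 𝕜] [IsStrictOrderedRing 𝕜] [LinearOrder β]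
  {s : Set 𝕜} {f : 𝕜 → β}

theorem StrictMonoOn.strictQuasiconcaveOn (hf : StrictMonoOn f s) (hs : Convex 𝕜 s) :
    StrictQuasiconcaveOn 𝕜 s f := by
  refine ⟨hs, fun x hx y hy hxy z hz => ?_⟩
  have hzs := hs.openSegment_subset hx hy hz
  rw [openSegment_eq_Ioo' hxy] at hz
  obtain hmin | hmin := min_choice x y <;> rw [hmin] at hz
  · exact (min_le_left _ _).trans_lt (hf hx hzs hz.1)
  · exact (min_le_right _ _).trans_lt (hf hy hzs hz.1)

theorem StrictAntiOn.strictQuasiconcaveOn (hf : StrictAntiOn f s) (hs : Convex 𝕜 s) :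
    StrictQuasiconcaveOn 𝕜 s f := by
  refine ⟨hs, fun x hx y hy hxy z hz => ?_⟩
  have hzs := hs.openSegment_subset hx hy hz
  rw [openSegment_eq_Ioo' hxy] at hz
  obtain hmax | hmax := max_choice x y <;> rw [hmax] at hz
  · exact (min_le_left _ _).trans_lt (hf hzs hx hz.2)
  · exact (min_le_right _ _).trans_lt (hf hzs hy hz.2)

end LinearOrderedField

theorem strictQuasiconcaveOn_Iic_abs_sub_mul {w : ℝ} (hw : 0 < w) (k : ℝ) :
    StrictQuasiconcaveOn ℝ (Iic k) fun x => |x - k| * w := by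
  refine StrictAntiOn.strictQuasiconcaveOn (fun x hx y hy hxy => ?_) (convex_Iic k)
  rw [abs_of_nonpos (sub_nonpos.2 hy), abs_of_nonpos (sub_nonpos.2 hx)]
  nlinarith

theorem strictQuasiconcaveOn_Ici_abs_sub_mul {w : ℝ} (hw : 0 < w) (k : ℝ) :
    StrictQuasiconcaveOn ℝ (Ici k) fun x => |x - k| * w := by
  refine StrictMonoOn.strictQuasiconcaveOn (fun x hx y hy hxy => ?_) (convex_Ici k)
  rw [abs_of_nonneg (sub_nonneg.2 hx), abs_of_nonneg (sub_nonneg.2 hy)]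
  nlinarith

theorem exists_envelope_ne_of_strictQuasiconcave_pieces {ι : Type*} {J : Set ι} (hJ : J.Finite)
    {f : ι → ℝ → ℝ} (hf : ∀ i ∈ J, ∃ k, StrictQuasiconcaveOn ℝ (Iic k) (f i) ∧
      StrictQuasiconcaveOn ℝ (Ici k) (f i))
    {I : Set ℝ} (hI : Convex ℝ I) (hI_inf : I.Infinite) {E : ℝ → ℝ}
    (hle : ∀ i ∈ J, ∀ x ∈ I, f i x ≤ E x) (hatt : ∀ x ∈ I, ∃ i ∈ J, f i x = E x) (c : ℝ) :
    ∃ x ∈ I, E x ≠ c := by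
  by_contra! hconst
  choose! k hk using hf
  obtain ⟨x₀, hx₀⟩ := hI_inf.nonempty
  have : Nonempty ι := ⟨(hatt x₀ hx₀).choose⟩
  choose! j hjJ hj using hatt
  have hmaps : MapsTo (fun x => (j x, decide (x ≤ k (j x)))) I (J ×ˢ univ) :=
    fun x hx => ⟨hjJ x hx, trivial⟩
  obtain ⟨x, hx, y, hy, hxy, hsame⟩ :=
    hI_inf.exists_ne_map_eq_of_mapsTo hmaps (hJ.prod finite_univ)
  simp only [Prod.mk.injEq, decide_eq_decide] at hsame
  obtain ⟨hji, hside⟩ := hsame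
  set i := j x
  have hiJ : i ∈ J := hjJ x hx
  have hfx : f i x = c := (hj x hx).trans (hconst x hx)
  have hfy : f i y = c := by rw [hji]; exact (hj y hy).trans (hconst y hy)
  have no_piece : ∀ S, StrictQuasiconcaveOn ℝ S (f i) → x ∈ S → y ∈ S → False := by
    intro S hS hxS hyS
    have hmid := midpoint_mem_openSegment (𝕜 := ℝ) x y
    have hmidI := hI.openSegment_subset hx hy hmid
    have hlt := hS.2 hxS hyS hxy _ hmid
    rw [hfx, hfy, min_self, ← hconst _ hmidI] at hlt
    exact (hle i hiJ _ hmidI).not_gt hlt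
  rw [← hji] at hside
  by_cases hxk : x ≤ k i
  · exact no_piece _ (hk i hiJ).1 hxk (hside.1 hxk)
  · exact no_piece _ (hk i hiJ).2 (le_of_not_ge hxk) (le_of_not_ge (hxk ∘ hside.2))

namespace WGraph

variable (G : WGraph n)

theorem exists_strictQuasiconcaveOn_pdist {u v : Fin n} (huv : G.adj u v = true)
    (s t : Fin n) (β : ℝ) : ∃ k, StrictQuasiconcaveOn ℝ (Iic k) (G.pdist u v · s t β) ∧
      StrictQuasiconcaveOn ℝ (Ici k) (G.pdist u v · s t β) := by
  have hw := G.wpos u v huv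
  have hinc : ∀ S : Set ℝ, Convex ℝ S → ∀ A B : ℝ,
      StrictQuasiconcaveOn ℝ S fun x => x * G.w u v + A + B := fun S hS A B =>
    StrictMonoOn.strictQuasiconcaveOn (fun x _ y _ hxy => by nlinarith) hS
  have hdec : ∀ S : Set ℝ, Convex ℝ S → ∀ A B : ℝ,
      StrictQuasiconcaveOn ℝ S fun x => (1 - x) * G.w u v + A + B := fun S hS A B =>
    StrictAntiOn.strictQuasiconcaveOn (fun x _ y _ hxy => by nlinarith) hS
  have hbase : ∀ S : Set ℝ, Convex ℝ S → StrictQuasiconcaveOn ℝ S fun x =>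
      min (min (x * G.w u v + G.vdist u s + β * G.w s t)
          (x * G.w u v + G.vdist u t + (1 - β) * G.w s t))
        (min ((1 - x) * G.w u v + G.vdist v s + β * G.w s t)
          ((1 - x) * G.w u v + G.vdist v t + (1 - β) * G.w s t)) := fun S hS =>
    ((hinc S hS _ _).min (hinc S hS _ _)).min ((hdec S hS _ _).min (hdec S hS _ _))
  by_cases h₁ : u = s ∧ v = t
  · simp only [pdist, if_pos h₁]
    exact ⟨β, (strictQuasiconcaveOn_Iic_abs_sub_mul hw β).min (hbase _ (convex_Iic β)),
      (strictQuasiconcaveOn_Ici_abs_sub_mul hw β).min (hbase _ (convex_Ici β))⟩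
  by_cases h₂ : u = t ∧ v = s
  · simp only [pdist, if_neg h₁, if_pos h₂]
    exact ⟨1 - β, (strictQuasiconcaveOn_Iic_abs_sub_mul hw _).min (hbase _ (convex_Iic _)),
      (strictQuasiconcaveOn_Ici_abs_sub_mul hw _).min (hbase _ (convex_Ici _))⟩
  simp only [pdist, if_neg h₁, if_neg h₂]
  exact ⟨0, hbase _ (convex_Iic 0), hbase _ (convex_Ici 0)⟩

theorem continuous_pdist (u v : Fin n) (x : ℝ) (s t : Fin n) :
    Continuous fun β => G.pdist u v x s t β := by
  by_cases h₁ : u = s ∧ v = t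
  · simp only [pdist, if_pos h₁]; fun_prop
  by_cases h₂ : u = t ∧ v = s
  · simp only [pdist, if_neg h₁, if_pos h₂]; fun_prop
  simp only [pdist, if_neg h₁, if_neg h₂]; fun_prop

theorem isCompact_setOf_pdist (u v : Fin n) (x : ℝ) :
    IsCompact {r | ∃ s t, G.adj s t = true ∧ ∃ β ∈ Icc (0:ℝ) 1, r = G.pdist u v x s t β} := by
  have hunion : {r | ∃ s t, G.adj s t = true ∧ ∃ β ∈ Icc (0:ℝ) 1, r = G.pdist u v x s t β} =
      ⋃ e ∈ {e : Fin n × Fin n | G.adj e.1 e.2 = true}, G.pdist u v x e.1 e.2 '' Icc 0 1 := by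
    ext r
    simp only [mem_ofPred_eq, mem_iUnion, mem_image, Prod.exists, exists_prop, eq_comm (a := r)]
  rw [hunion]
  exact (toFinite _).isCompact_biUnion fun e _ =>
    isCompact_Icc.image (G.continuous_pdist u v x e.1 e.2)

theorem pdist_le_eccOn (u v : Fin n) (x : ℝ) {s t : Fin n} (hst : G.adj s t = true) {β : ℝ}
    (hβ : β ∈ Icc (0:ℝ) 1) : G.pdist u v x s t β ≤ G.eccOn u v x :=
  le_csSup (G.isCompact_setOf_pdist u v x).bddAbove ⟨s, t, hst, β, hβ, rfl⟩

theorem exists_pdist_eq_eccOn {u v : Fin n} (huv : G.adj u v = true) (x : ℝ) :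
    ∃ s t, G.adj s t = true ∧ ∃ β ∈ Icc (0:ℝ) 1, G.pdist u v x s t β = G.eccOn u v x := by
  obtain ⟨s, t, hst, β, hβ, h⟩ := (G.isCompact_setOf_pdist u v x).sSup_mem
    ⟨_, u, v, huv, 0, left_mem_Icc.2 zero_le_one, rfl⟩
  exact ⟨s, t, hst, β, hβ, h.symm⟩

end WGraph

theorem finitely_many_farthest_points_no_constant_piece_general (n : ℕ) (G : WGraph n)
    (hfin : {g : NetPt n | G.validPt g ∧ ∃ p : NetPt n, G.validPt p ∧
        G.pdistPt p g = G.eccPt p}.Finite) :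
    ∀ u v : Fin n, G.adj u v = true → ∀ a b : ℝ, 0 ≤ a → a < b → b ≤ 1 →
      ∃ mu ∈ Icc a b, G.eccOn u v mu ≠ G.eccOn u v a := by
  intro u v huv a b ha hab hb
  refine exists_envelope_ne_of_strictQuasiconcave_pieces hfin
    (f := fun g x => G.pdist u v x g.1.1 g.1.2 g.2)
    (fun g _ => G.exists_strictQuasiconcaveOn_pdist huv _ _ _) (convex_Icc a b) (Icc_infinite hab)
    (fun g hg x _ => G.pdist_le_eccOn u v x hg.1.1 hg.1.2) (fun x hx => ?_) _
  obtain ⟨s, t, hst, β, hβ, hfar⟩ := G.exists_pdist_eq_eccOn huv x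
  exact ⟨((s, t), β), ⟨⟨hst, hβ⟩, ((u, v), x), ⟨huv, ha.trans hx.1, hx.2.trans hb⟩, hfar⟩, hfar⟩

/-- If only finitely many points of `G` are farthest points of some point of `G`, then
the eccentricity function is not locally constant: on every edge it is nonconstant on
every nondegenerate parameter subinterval. -/
theorem finitely_many_farthest_points_no_constant_piece (n : ℕ) (G : WGraph n)
    (hconn : G.toSimple.Connected)
    (hfin : {g : NetPt n | G.validPt g ∧ ∃ p : NetPt n, G.validPt p ∧
        G.pdistPt p g = G.eccPt p}.Finite) :
    ∀ u v : Fin n, G.adj u v = true → ∀ a b : ℝ, 0 ≤ a → a < b → b ≤ 1 →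
      ∃ mu ∈ Icc a b, G.eccOn u v mu ≠ G.eccOn u v a :=
  finitely_many_farthest_points_no_constant_piece_general n G hfin
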